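/- arXiv:1609.00973 — 2 statements merged into one kernel-verified Lean document; each statement's English description precedes it below -/
import Mathlib

section
/- If Λ is a Λ-sequence and f : [0,1] → ℝ is Lebesgue-integrable with var_Λ(f) < ∞, then for every n ∈ ℕ the Kantorovich polynomial satisfies V_Λ(K_nf) ≤ var_Λ(f); consequently var_Λ(K_nf) ≤ var_Λ(f), i.e. the Kantorovich polynomials diminish the lower Λ-variation. -/
/-!
The Kantorovich coefficient `(n + 1) ∫_{k/(n+1)}^{(k+1)/(n+1)} g` is the average over `u ∈ (0, 1]`
of `g ((k + u) / (n + 1))`, and `∑ₖ b_{n,k}(x) cₖ` is the average over `v ∈ (0, 1]` of `c_{N(x,v)}`,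
where `N(x, ·)` is the quantile function of the binomial distribution `B(n, x)`. Hence
`K_n g (x) = ∫∫ g ((N(x, v) + u) / (n + 1)) du dv`.
The binomial distribution function decreases in `x` (its derivative is `-n b_{n-1,m}(x)`), so
`N(·, v)` is monotone and, for fixed `u` and `v`, the integrand is `g` composed with a monotone
self-map of `[0, 1]`: its Λ-variation is at most `V_Λ(g)`. Averaging does not increase the
Λ-variation, so `V_Λ(K_n g) ≤ V_Λ(g)`, and `K_n g` only depends on `g` modulo null sets.
-/

open Filter Set MeasureTheory
open scoped ENNReal Topology

/-- `l` is a Λ-sequence (indexed from 0, so `l 0` plays the role of `λ₁`):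
a nondecreasing sequence of positive reals whose reciprocals have divergent sum. -/
def IsLambdaSeq (l : ℕ → ℝ) : Prop :=
  Monotone l ∧ (∀ n, 0 < l n) ∧ ¬ Summable (fun n => 1 / l n)

/-- A proper Λ-sequence: additionally `λₙ → ∞`. -/
def IsProperLambdaSeq (l : ℕ → ℝ) : Prop :=
  IsLambdaSeq l ∧ Tendsto l atTop atTop

/-- The Λ-variation of `f` computed over partition points taken from `K`:
the supremum of `∑ⱼ |f(x_{j+1}) - f(x_j)| / λ_{β(j)}` over all `m`, all nondecreasing
tuples `x₁ ≤ … ≤ x_{m+1}` of points of `K` and all permutations `β` of the gaps. -/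
noncomputable def lamVarOn (l : ℕ → ℝ) (f : ℝ → ℝ) (K : Set ℝ) : ℝ≥0∞ :=
  ⨆ (m : ℕ) (x : Fin (m + 1) → ℝ) (_ : Monotone x) (_ : ∀ j, x j ∈ K)
    (β : Equiv.Perm (Fin m)),
    ∑ j : Fin m, ENNReal.ofReal (|f (x j.succ) - f (x j.castSucc)| / l (β j))

/-- The Λ-variation of `f : [0,1] → ℝ`. -/
noncomputable def lamVar (l : ℕ → ℝ) (f : ℝ → ℝ) : ℝ≥0∞ :=
  lamVarOn l f (Set.Icc 0 1)

/-- The norm `‖f‖_Λ = V_Λ(f) + |f 0|` (valued in `[0,∞]`). -/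
noncomputable def lamNorm (l : ℕ → ℝ) (f : ℝ → ℝ) : ℝ≥0∞ :=
  lamVar l f + ENNReal.ofReal |f 0|

/-- `f` is continuous in Λ-variation: `V_{Λ_(m)}(f) → 0` as `m → ∞`. -/
def ContInLamVar (l : ℕ → ℝ) (f : ℝ → ℝ) : Prop :=
  Tendsto (fun m => lamVar (fun n => l (n + m)) f) atTop (𝓝 0)

/-- The restricted Λ-variation `V_{Λ,δ}(f)`: the supremum of `∑ⱼ |f(bⱼ) - f(aⱼ)| / λⱼ`
over all finite sequences of nonoverlapping closed subintervals `[aⱼ, bⱼ]` of `[0,1]`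
of length at most `δ`, listed in any order. -/
noncomputable def lamVarDelta (l : ℕ → ℝ) (δ : ℝ) (f : ℝ → ℝ) : ℝ≥0∞ :=
  ⨆ (k : ℕ) (a : Fin k → ℝ) (b : Fin k → ℝ)
    (_ : ∀ j, 0 ≤ a j ∧ a j ≤ b j ∧ b j ≤ 1 ∧ b j - a j ≤ δ)
    (_ : ∀ i j, i ≠ j → b i ≤ a j ∨ b j ≤ a i),
    ∑ j : Fin k, ENNReal.ofReal (|f (b j) - f (a j)| / l j)

/-- The `n`-th Bernstein polynomial of `f : [0,1] → ℝ`. -/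
noncomputable def bern (n : ℕ) (f : ℝ → ℝ) (x : ℝ) : ℝ :=
  ∑ k ∈ Finset.range (n + 1),
    f ((k : ℝ) / n) * (n.choose k : ℝ) * x ^ k * (1 - x) ^ (n - k)

/-- The `n`-th Kantorovich polynomial of `f : [0,1] → ℝ`. -/
noncomputable def kant (n : ℕ) (f : ℝ → ℝ) (x : ℝ) : ℝ :=
  ∑ k ∈ Finset.range (n + 1),
    (n.choose k : ℝ) * x ^ k * (1 - x) ^ (n - k) *
      ((n + 1) * ∫ t in ((k : ℝ) / (n + 1))..(((k : ℝ) + 1) / (n + 1)), f t)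

/-- The lower Λ-variation `var_Λ(f) = inf { V_Λ(g) : g = f a.e. on [0,1] }`. -/
noncomputable def lowerLamVar (l : ℕ → ℝ) (f : ℝ → ℝ) : ℝ≥0∞ :=
  ⨅ (g : ℝ → ℝ) (_ : f =ᵐ[volume.restrict (Set.Icc 0 1)] g), lamVar l g

open Polynomial

theorem monotone_sum_range_of_nonneg {p : ℕ → ℝ} (hp : ∀ i, 0 ≤ p i) :
    Monotone fun m => ∑ i ∈ Finset.range m, p i :=
  monotone_nat_of_le_succ fun m => by simp [Finset.sum_range_succ, hp m]

section DiscreteQuantile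

variable {p q : ℕ → ℝ} {n k : ℕ} {v : ℝ}

/-- The quantile function on `(0, 1]` of a probability distribution `p` on `{0, …, n}`. -/
noncomputable def discreteQuantile (p : ℕ → ℝ) (n : ℕ) (v : ℝ) : ℕ :=
  ((Finset.range n).filter fun k => ∑ i ∈ Finset.range (k + 1), p i < v).card

theorem discreteQuantile_le : discreteQuantile p n v ≤ n :=
  (Finset.card_filter_le _ _).trans (Finset.card_range n).le

theorem discreteQuantile_mono
    (h : ∀ k, ∑ i ∈ Finset.range (k + 1), q i ≤ ∑ i ∈ Finset.range (k + 1), p i) :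
    discreteQuantile p n v ≤ discreteQuantile q n v :=
  Finset.card_le_card fun k hk => by
    simp only [Finset.mem_filter] at hk ⊢
    exact ⟨hk.1, (h k).trans_lt hk.2⟩

theorem discreteQuantile_eq_of_mem_Ioc (hp : ∀ i, 0 ≤ p i) (hk : k ≤ n)
    (hv : v ∈ Ioc (∑ i ∈ Finset.range k, p i) (∑ i ∈ Finset.range (k + 1), p i)) :
    discreteQuantile p n v = k := by
  have hP := monotone_sum_range_of_nonneg hp
  rw [discreteQuantile, ← Finset.card_range k]
  congr 1
  ext i
  simp only [Finset.mem_filter, Finset.mem_range]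
  constructor
  · rintro ⟨-, hi⟩
    by_contra! hki
    exact (hv.2.trans (hP (by omega))).not_gt hi
  · intro hi
    exact ⟨by omega, (hP (by omega : i + 1 ≤ k)).trans_lt hv.1⟩

theorem Ioc_zero_one_eq_biUnion_Ioc_sum_range (hp : ∀ i, 0 ≤ p i)
    (hsum : ∑ i ∈ Finset.range (n + 1), p i = 1) :
    Ioc (0 : ℝ) 1 = ⋃ k ∈ Finset.range (n + 1),
      Ioc (∑ i ∈ Finset.range k, p i) (∑ i ∈ Finset.range (k + 1), p i) := by
  have := (monotone_sum_range_of_nonneg hp).biUnion_Ico_Ioc_map_succ 0 (n + 1)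
  simp only [Order.succ_eq_add_one, Finset.sum_range_zero, hsum] at this
  rw [← this]
  simp

theorem integrableOn_comp_discreteQuantile (hp : ∀ i, 0 ≤ p i)
    (hsum : ∑ i ∈ Finset.range (n + 1), p i = 1) (φ : ℕ → ℝ) :
    IntegrableOn (fun v => φ (discreteQuantile p n v)) (Ioc 0 1) := by
  rw [Ioc_zero_one_eq_biUnion_Ioc_sum_range hp hsum, integrableOn_finset_iUnion]
  intro k hk
  refine (integrableOn_const (C := φ k) (by simp)).congr_fun (fun v hv => ?_) measurableSet_Ioc
  rw [discreteQuantile_eq_of_mem_Ioc hp (Finset.mem_range_succ_iff.mp hk) hv]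

theorem setIntegral_comp_discreteQuantile (hp : ∀ i, 0 ≤ p i)
    (hsum : ∑ i ∈ Finset.range (n + 1), p i = 1) (φ : ℕ → ℝ) :
    ∫ v in Ioc 0 1, φ (discreteQuantile p n v) = ∑ k ∈ Finset.range (n + 1), p k * φ k := by
  have hP := monotone_sum_range_of_nonneg hp
  have hpiece : ∀ k ∈ Finset.range (n + 1), EqOn (fun v => φ (discreteQuantile p n v))
      (fun _ => φ k) (Ioc (∑ i ∈ Finset.range k, p i) (∑ i ∈ Finset.range (k + 1), p i)) :=
    fun k hk v hv => congrArg φ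
      (discreteQuantile_eq_of_mem_Ioc hp (Finset.mem_range_succ_iff.mp hk) hv)
  have hdisj : Set.Pairwise (Finset.range (n + 1) : Set ℕ) (Function.onFun Disjoint fun k =>
      Ioc (∑ i ∈ Finset.range k, p i) (∑ i ∈ Finset.range (k + 1), p i)) :=
    hP.pairwise_disjoint_on_Ioc_succ.set_pairwise _
  rw [Ioc_zero_one_eq_biUnion_Ioc_sum_range hp hsum, integral_biUnion_finset _
    (fun _ _ => measurableSet_Ioc) hdisj
    fun k hk => (integrableOn_const (C := φ k) (by simp)).congr_fun (hpiece k hk).symm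
      measurableSet_Ioc]
  refine Finset.sum_congr rfl fun k hk => ?_
  rw [setIntegral_congr_fun measurableSet_Ioc (hpiece k hk), setIntegral_const,
    Real.volume_real_Ioc_of_le (hP k.le_succ)]
  simp [Finset.sum_range_succ]

end DiscreteQuantile

theorem bernsteinPolynomial_eval_nonneg {n k : ℕ} {x : ℝ} (hx : x ∈ Icc (0 : ℝ) 1) :
    0 ≤ (bernsteinPolynomial ℝ n k).eval x := by
  have := hx.1
  have : 0 ≤ 1 - x := sub_nonneg.2 hx.2
  simp only [bernsteinPolynomial, eval_mul, eval_pow, eval_natCast, eval_X, eval_sub, eval_one]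
  positivity

theorem sum_bernsteinPolynomial_eval (n : ℕ) (x : ℝ) :
    ∑ k ∈ Finset.range (n + 1), (bernsteinPolynomial ℝ n k).eval x = 1 := by
  rw [← eval_finsetSum, bernsteinPolynomial.sum, eval_one]

theorem derivative_sum_bernsteinPolynomial (R : Type*) [CommRing R] (n m : ℕ) :
    derivative (∑ i ∈ Finset.range (m + 1), bernsteinPolynomial R n i) =
      -(n : R[X]) * bernsteinPolynomial R (n - 1) m := by
  induction m with
  | zero => simp [bernsteinPolynomial.derivative_zero]
  | succ m ih =>
    rw [Finset.sum_range_succ, derivative_add, ih, bernsteinPolynomial.derivative_succ]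
    ring

theorem antitoneOn_sum_bernsteinPolynomial_eval (n m : ℕ) :
    AntitoneOn (fun x : ℝ => ∑ i ∈ Finset.range (m + 1), (bernsteinPolynomial ℝ n i).eval x)
      (Icc 0 1) := by
  simp_rw [← eval_finsetSum]
  refine antitoneOn_of_deriv_nonpos (convex_Icc 0 1) (Polynomial.continuousOn _)
    (Polynomial.differentiableOn _) fun x hx => ?_
  rw [Polynomial.deriv, derivative_sum_bernsteinPolynomial, eval_mul, eval_neg, eval_natCast,
    neg_mul, neg_nonpos]
  exact mul_nonneg n.cast_nonneg (bernsteinPolynomial_eval_nonneg (interior_subset hx))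

noncomputable def binomialQuantile (n : ℕ) (x v : ℝ) : ℕ :=
  discreteQuantile (fun k => (bernsteinPolynomial ℝ n k).eval x) n v

theorem monotoneOn_binomialQuantile (n : ℕ) (v : ℝ) :
    MonotoneOn (fun x => binomialQuantile n x v) (Icc 0 1) :=
  fun _ hx _ hy hxy =>
    discreteQuantile_mono fun k => antitoneOn_sum_bernsteinPolynomial_eval n k hx hy hxy

section LamVar

variable {l : ℕ → ℝ} {f : ℝ → ℝ} {K : Set ℝ}

theorem sum_le_lamVarOn {m : ℕ} {x : Fin (m + 1) → ℝ} (hx : Monotone x) (hxK : ∀ j, x j ∈ K)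
    (β : Equiv.Perm (Fin m)) :
    ∑ j : Fin m, ENNReal.ofReal (|f (x j.succ) - f (x j.castSucc)| / l (β j)) ≤
      lamVarOn l f K :=
  le_iSup_of_le m <| le_iSup_of_le x <| le_iSup_of_le hx <| le_iSup_of_le hxK <|
    le_iSup_of_le β le_rfl

theorem lamVarOn_le {V : ℝ≥0∞}
    (h : ∀ (m : ℕ) (x : Fin (m + 1) → ℝ), Monotone x → (∀ j, x j ∈ K) →
      ∀ β : Equiv.Perm (Fin m),
        ∑ j : Fin m, ENNReal.ofReal (|f (x j.succ) - f (x j.castSucc)| / l (β j)) ≤ V) :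
    lamVarOn l f K ≤ V :=
  iSup_le fun m => iSup_le fun x => iSup_le fun hx => iSup_le fun hxK => iSup_le (h m x hx hxK)

theorem lamVarOn_comp_le {φ : ℝ → ℝ} {L : Set ℝ} (hφ : MonotoneOn φ K) (hφKL : MapsTo φ K L) :
    lamVarOn l (f ∘ φ) K ≤ lamVarOn l f L :=
  lamVarOn_le fun _ _ hx hxK β =>
    sum_le_lamVarOn (fun _ _ hij => hφ (hxK _) (hxK _) (hx hij)) (fun j => hφKL (hxK j)) β

theorem ofReal_abs_integral_div_le {Ω : Type*} [MeasurableSpace Ω] (μ : Measure Ω) (h : Ω → ℝ)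
    (c : ℝ) :
    ENNReal.ofReal (|∫ ω, h ω ∂μ| / c) ≤ ∫⁻ ω, ENNReal.ofReal (|h ω| / c) ∂μ := by
  rcases le_or_gt c 0 with hc | hc
  · rw [ENNReal.ofReal_of_nonpos (div_nonpos_of_nonneg_of_nonpos (abs_nonneg _) hc)]
    exact zero_le
  simp_rw [ENNReal.ofReal_div_of_pos hc, ← Real.enorm_eq_ofReal_abs, div_eq_mul_inv]
  rw [lintegral_mul_const' _ _ (ENNReal.inv_ne_top.2 (ENNReal.ofReal_pos.2 hc).ne')]
  gcongr
  exact enorm_integral_le_lintegral_enorm h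

theorem lamVarOn_le_of_eq_integral {Ω : Type*} [MeasurableSpace Ω] {μ : Measure Ω}
    [IsProbabilityMeasure μ] {h : Ω → ℝ → ℝ} {V : ℝ≥0∞}
    (hf : ∀ x ∈ K, f x = ∫ ω, h ω x ∂μ) (hh : ∀ x ∈ K, Integrable (fun ω => h ω x) μ)
    (hV : ∀ᵐ ω ∂μ, lamVarOn l (h ω) K ≤ V) :
    lamVarOn l f K ≤ V := by
  refine lamVarOn_le fun m x hx hxK β => ?_
  have hincr : ∀ j : Fin m, Integrable (fun ω => h ω (x j.succ) - h ω (x j.castSucc)) μ :=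
    fun j => (hh _ (hxK _)).sub (hh _ (hxK _))
  calc ∑ j : Fin m, ENNReal.ofReal (|f (x j.succ) - f (x j.castSucc)| / l (β j))
      ≤ ∑ j : Fin m, ∫⁻ ω, ENNReal.ofReal
          (|h ω (x j.succ) - h ω (x j.castSucc)| / l (β j)) ∂μ := by
        gcongr with j
        rw [hf _ (hxK _), hf _ (hxK _), ← integral_sub (hh _ (hxK _)) (hh _ (hxK _))]
        exact ofReal_abs_integral_div_le μ _ _
    _ = ∫⁻ ω, ∑ j : Fin m, ENNReal.ofReal
          (|h ω (x j.succ) - h ω (x j.castSucc)| / l (β j)) ∂μ :=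
        (lintegral_finsetSum' _ fun j _ =>
          ((hincr j).aemeasurable.abs.div_const _).ennreal_ofReal).symm
    _ ≤ ∫⁻ _, V ∂μ := lintegral_mono_ae <| hV.mono fun ω hω => (sum_le_lamVarOn hx hxK β).trans hω
    _ = V := by simp

end LamVar

section Kantorovich

variable {n k : ℕ}

theorem add_div_mem_Icc {u : ℝ} (hk : k ≤ n) (hu : u ∈ Icc (0 : ℝ) 1) :
    ((k : ℝ) + u) / (n + 1) ∈ Icc (0 : ℝ) 1 := by
  have : (k : ℝ) ≤ n := by exact_mod_cast hk
  constructor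
  · have := hu.1; positivity
  · rw [div_le_one (by positivity)]; linarith [hu.2]

theorem Ioc_div_subset_Icc (hk : k ≤ n) :
    Ioc ((k : ℝ) / (n + 1)) (((k : ℝ) + 1) / (n + 1)) ⊆ Icc 0 1 :=
  fun _ ht => ⟨(div_nonneg k.cast_nonneg (by positivity)).trans ht.1.le,
    ht.2.trans (add_div_mem_Icc hk ⟨zero_le_one, le_rfl⟩).2⟩

theorem kant_eq_sum_bernsteinPolynomial (n : ℕ) (g : ℝ → ℝ) (x : ℝ) :
    kant n g x = ∑ k ∈ Finset.range (n + 1),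
      (bernsteinPolynomial ℝ n k).eval x * ∫ u in Ioc 0 1, g ((k + u) / (n + 1)) := by
  refine Finset.sum_congr rfl fun k _ => ?_
  have hn : ((n : ℝ) + 1) ≠ 0 := by positivity
  have hcoeff := intervalIntegral.integral_comp_add_div (a := 0) (b := 1) g hn (k / (n + 1))
  simp only [add_div, hcoeff, ← intervalIntegral.integral_of_le zero_le_one, zero_div, add_zero,
    smul_eq_mul, bernsteinPolynomial, eval_mul, eval_pow, eval_natCast, eval_X,
    eval_sub, eval_one]

theorem integrableOn_comp_add_div {g : ℝ → ℝ} (hg : IntegrableOn g (Icc 0 1)) (hk : k ≤ n) :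
    IntegrableOn (fun u => g ((k + u) / (n + 1))) (Ioc 0 1) := by
  have hn : ((n : ℝ) + 1) ≠ 0 := by positivity
  have hI : IntervalIntegrable g volume ((k : ℝ) / (n + 1)) (((k : ℝ) + 1) / (n + 1)) :=
    (intervalIntegrable_iff_integrableOn_Ioc_of_le (by gcongr; linarith)).2
      (hg.mono_set (Ioc_div_subset_Icc hk))
  have := (hI.comp_mul_left (c := ((n : ℝ) + 1)⁻¹)).comp_add_left (k : ℝ)
  simp only [div_inv_eq_mul, div_mul_cancel₀ _ hn, sub_self, add_sub_cancel_left,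
    inv_mul_eq_div] at this
  exact (intervalIntegrable_iff_integrableOn_Ioc_of_le zero_le_one).1 this

theorem kant_eq_setIntegral_binomialQuantile (n : ℕ) (g : ℝ → ℝ) {x : ℝ} (hx : x ∈ Icc (0 : ℝ) 1) :
    kant n g x = ∫ v in Ioc 0 1, ∫ u in Ioc 0 1, g ((binomialQuantile n x v + u) / (n + 1)) := by
  rw [kant_eq_sum_bernsteinPolynomial]
  exact (setIntegral_comp_discreteQuantile (fun _ => bernsteinPolynomial_eval_nonneg hx)
    (sum_bernsteinPolynomial_eval n x) fun k => ∫ u in Ioc 0 1, g ((k + u) / (n + 1))).symm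

instance isProbabilityMeasure_restrict_Ioc_zero_one :
    IsProbabilityMeasure (volume.restrict (Ioc (0 : ℝ) 1)) :=
  ⟨by simp⟩

theorem lamVar_kant_le (l : ℕ → ℝ) {g : ℝ → ℝ} (hg : IntegrableOn g (Icc 0 1)) (n : ℕ) :
    lamVar l (kant n g) ≤ lamVar l g := by
  refine lamVarOn_le_of_eq_integral (fun x hx => kant_eq_setIntegral_binomialQuantile n g hx)
    (fun x hx => integrableOn_comp_discreteQuantile (fun _ => bernsteinPolynomial_eval_nonneg hx)
      (sum_bernsteinPolynomial_eval n x) fun k => ∫ u in Ioc 0 1, g ((k + u) / (n + 1)))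
    (ae_of_all _ fun v => ?_)
  refine lamVarOn_le_of_eq_integral (fun x _ => rfl)
    (fun x _ => integrableOn_comp_add_div hg discreteQuantile_le) ?_
  filter_upwards [ae_restrict_mem measurableSet_Ioc] with u hu
  refine lamVarOn_comp_le (fun x hx y hy hxy => ?_)
    (fun x _ => add_div_mem_Icc discreteQuantile_le (Ioc_subset_Icc_self hu))
  gcongr
  exact_mod_cast monotoneOn_binomialQuantile n v hx hy hxy

theorem kant_congr {f g : ℝ → ℝ} (n : ℕ) (hfg : f =ᵐ[volume.restrict (Icc 0 1)] g) :
    kant n f = kant n g := by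
  funext x
  refine Finset.sum_congr rfl fun k hk => ?_
  have hle : (k : ℝ) / (n + 1) ≤ ((k : ℝ) + 1) / (n + 1) := by gcongr; linarith
  rw [intervalIntegral.integral_of_le hle, intervalIntegral.integral_of_le hle,
    integral_congr_ae (ae_restrict_of_ae_restrict_of_subset
      (Ioc_div_subset_Icc (Finset.mem_range_succ_iff.mp hk)) hfg)]

end Kantorovich

theorem kantorovich_diminishes_lower_lamVar_general (l : ℕ → ℝ)
    (f : ℝ → ℝ) (hint : IntegrableOn f (Set.Icc 0 1) volume) (n : ℕ) :
    lamVar l (kant n f) ≤ lowerLamVar l f ∧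
    lowerLamVar l (kant n f) ≤ lowerLamVar l f := by
  have hkant : lamVar l (kant n f) ≤ lowerLamVar l f :=
    le_iInf₂ fun g hfg => kant_congr n hfg ▸ lamVar_kant_le l (hint.congr hfg) n
  exact ⟨hkant, (iInf₂_le (kant n f) EventuallyEq.rfl).trans hkant⟩

/-- If `Λ` is a Λ-sequence and `f` is Lebesgue-integrable on `[0,1]` with
`var_Λ(f) < ∞`, then `V_Λ(K_n f) ≤ var_Λ(f)` for all `n`, and consequently
`var_Λ(K_n f) ≤ var_Λ(f)`: the Kantorovich polynomials diminish the lower Λ-variation. -/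
theorem kantorovich_diminishes_lower_lamVar (l : ℕ → ℝ) (hl : IsLambdaSeq l)
    (f : ℝ → ℝ) (hint : IntegrableOn f (Set.Icc 0 1) volume)
    (hf : lowerLamVar l f < ⊤) (n : ℕ) :
    lamVar l (kant n f) ≤ lowerLamVar l f ∧
    lowerLamVar l (kant n f) ≤ lowerLamVar l f :=
  kantorovich_diminishes_lower_lamVar_general l f hint n
end

section
/- Let Λ be a Λ-sequence. A continuous function f : [0,1] → ℝ is of bounded Λ-variation if and only if sup_{n≥1} ‖B_nf‖_Λ < ∞; that is, the continuous functions of bounded Λ-variation are exactly the continuous functions whose Bernstein polynomials have uniformly bounded ‖·‖_Λ norms. -/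
open Filter Set MeasureTheory
open scoped ENNReal Topology

/-!
Pad a partition `0 ≤ x₀ ≤ … ≤ x_m ≤ 1` by `0` and `1`, and draw `n` of the `m + 2` resulting
gaps independently, each with probability its length. The number `N_j` of draws falling at or
before the gap ending at `x_j` is binomial `(n, x_j)` for every `j` simultaneously, so
`B_n f (x_j) = 𝔼 f (N_j / n)` with `N_j / n` a nondecreasing tuple in `[0,1]`. Every Λ-variation sum of `B_n f` is therefore
an average of Λ-variation sums of `f`, whence `V_Λ(B_n f) ≤ V_Λ(f)`; also `B_n f 0 = f 0`.
Conversely `B_n f → f` pointwise on `[0,1]` for continuous `f`, and a Λ-variation sum depends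
continuously on finitely many values, so `V_Λ(f) ≤ liminf V_Λ(B_n f)`.
-/

open Finset

section PiSums

variable {ι : Type*} [Fintype ι] [DecidableEq ι] {n : ℕ}

theorem filter_univ_mem_eq_piFinset (A : Finset ι) (S : Finset (Fin n)) :
    ({σ | ({i | σ i ∈ A} : Finset (Fin n)) = S} : Finset (Fin n → ι)) =
      Fintype.piFinset fun i => if i ∈ S then A else Aᶜ := by
  ext σ
  simp only [mem_filter, Finset.mem_univ, true_and, Fintype.mem_piFinset, Finset.ext_iff]
  refine ⟨fun h i => ?_, fun h i => ?_⟩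
  · split_ifs with hi <;> simp_all
  · by_cases hi : i ∈ S <;> simpa [hi] using h i

theorem sum_pi_prod_mul_card_filter {R : Type*} [CommSemiring R] (p : ι → R) (A : Finset ι)
    (g : ℕ → R) :
    ∑ σ : Fin n → ι, (∏ i, p (σ i)) * g #{i | σ i ∈ A} =
      ∑ k ∈ range (n + 1),
        n.choose k * (∑ t ∈ A, p t) ^ k * (∑ t ∈ Aᶜ, p t) ^ (n - k) * g k := by
  rw [← sum_fiberwise univ fun σ : Fin n → ι => ({i | σ i ∈ A} : Finset (Fin n))]
  have hfiber (S : Finset (Fin n)) :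
      ∑ σ : Fin n → ι with ({i | σ i ∈ A} : Finset (Fin n)) = S,
          (∏ i, p (σ i)) * g #{i | σ i ∈ A} =
        (∑ t ∈ A, p t) ^ #S * (∑ t ∈ Aᶜ, p t) ^ (n - #S) * g #S := by
    rw [sum_congr rfl fun σ hσ => by rw [(mem_filter.1 hσ).2], ← sum_mul,
      filter_univ_mem_eq_piFinset, ← prod_univ_sum]
    simp [apply_ite fun s : Finset ι => ∑ t ∈ s, p t, prod_ite, Finset.filter_not,
      Finset.card_sdiff]
  rw [sum_congr rfl fun S _ => hfiber S, ← Finset.powerset_univ,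
    sum_powerset_apply_card fun k => (∑ t ∈ A, p t) ^ k * (∑ t ∈ Aᶜ, p t) ^ (n - k) * g k]
  simp [nsmul_eq_mul, mul_assoc]

theorem bern_sum_eq_sum_pi (n : ℕ) (f : ℝ → ℝ) {p : ι → ℝ} (hp : ∑ t, p t = 1)
    (A : Finset ι) :
    bern n f (∑ t ∈ A, p t) = ∑ σ : Fin n → ι, (∏ i, p (σ i)) * f (#{i | σ i ∈ A} / n) := by
  have hcompl : ∑ t ∈ Aᶜ, p t = 1 - ∑ t ∈ A, p t := by
    rw [← hp, ← sum_add_sum_compl A]; ring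
  have hsum := sum_pi_prod_mul_card_filter (n := n) p A fun k : ℕ => f (k / n)
  rw [hsum, hcompl, bern]
  exact sum_congr rfl fun k _ => by ring

end PiSums

section UnitGaps

variable {m : ℕ} (x : Fin (m + 1) → ℝ)

def unitEndpoints : Fin (m + 3) → ℝ :=
  Fin.cons 0 (Fin.snoc x 1)

def unitGaps (t : Fin (m + 2)) : ℝ :=
  unitEndpoints x t.succ - unitEndpoints x t.castSucc

theorem unitGaps_nonneg (hx : Monotone x) (hx01 : ∀ j, x j ∈ Set.Icc 0 1) (t : Fin (m + 2)) :
    0 ≤ unitGaps x t := by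
  rw [unitGaps, sub_nonneg]
  induction t using Fin.cases with
  | zero => simpa [unitEndpoints] using (hx01 0).1
  | succ s =>
    induction s using Fin.lastCases with
    | last =>
      rw [unitEndpoints, Fin.castSucc_succ, Fin.cons_succ, Fin.cons_succ, Fin.snoc_castSucc,
        Fin.succ_last, Fin.snoc_last]
      exact (hx01 (Fin.last m)).2
    | cast r =>
      rw [unitEndpoints, Fin.castSucc_succ, Fin.cons_succ, Fin.cons_succ, Fin.snoc_castSucc,
        ← Fin.castSucc_succ, Fin.snoc_castSucc]
      exact hx (Fin.castSucc_le_succ r)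

theorem sum_Iic_unitGaps (j : Fin (m + 1)) : ∑ t ∈ Iic j.castSucc, unitGaps x t = x j := by
  simp only [unitGaps]
  rw [Fin.sum_Iic_sub]
  simp [unitEndpoints]

theorem sum_unitGaps : ∑ t, unitGaps x t = 1 := by
  rw [← Finset.Iic_top, Fin.top_eq_last]
  simp only [unitGaps]
  rw [Fin.sum_Iic_sub]
  simp [unitEndpoints]

end UnitGaps

noncomputable def empiricalCDF {n m : ℕ} (σ : Fin n → Fin (m + 2)) (j : Fin (m + 1)) : ℝ :=
  #{i | σ i ≤ j.castSucc} / n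

theorem monotone_empiricalCDF {n m : ℕ} (σ : Fin n → Fin (m + 2)) :
    Monotone (empiricalCDF σ) := fun j k hjk => by
  unfold empiricalCDF
  gcongr
  exact Fin.castSucc_le_castSucc_iff.2 hjk

theorem empiricalCDF_mem_Icc {n m : ℕ} (σ : Fin n → Fin (m + 2)) (j : Fin (m + 1)) :
    empiricalCDF σ j ∈ Set.Icc 0 1 := by
  refine ⟨by unfold empiricalCDF; positivity, div_le_one_of_le₀ ?_ n.cast_nonneg⟩
  exact_mod_cast (card_filter_le _ _).trans (card_univ.trans (Fintype.card_fin n)).le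

theorem bern_eq_sum_empiricalCDF (n : ℕ) (f : ℝ → ℝ) {m : ℕ} (x : Fin (m + 1) → ℝ)
    (j : Fin (m + 1)) :
    bern n f (x j) =
      ∑ σ : Fin n → Fin (m + 2), (∏ i, unitGaps x (σ i)) * f (empiricalCDF σ j) := by
  conv_lhs => rw [← sum_Iic_unitGaps x j, bern_sum_eq_sum_pi n f (sum_unitGaps x)]
  simp [empiricalCDF]

section LamSum

variable {l : ℕ → ℝ} {f g : ℝ → ℝ} {K : Set ℝ} {m : ℕ}

noncomputable def lamSum (l : ℕ → ℝ) (f : ℝ → ℝ) (x : Fin (m + 1) → ℝ)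
    (β : Equiv.Perm (Fin m)) : ℝ :=
  ∑ j, |f (x j.succ) - f (x j.castSucc)| / l (β j)

theorem lamVarOn_eq_iSup_lamSum (hl : ∀ k, 0 ≤ l k) :
    lamVarOn l f K = ⨆ (m : ℕ) (x : Fin (m + 1) → ℝ) (_ : Monotone x) (_ : ∀ j, x j ∈ K)
      (β : Equiv.Perm (Fin m)), ENNReal.ofReal (lamSum l f x β) := by
  simp only [lamVarOn, lamSum,
    ENNReal.ofReal_sum_of_nonneg fun j _ => div_nonneg (abs_nonneg _) (hl _)]

theorem lamSum_le_toReal_lamVarOn (hl : ∀ k, 0 ≤ l k) (hf : lamVarOn l f K ≠ ⊤)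
    {x : Fin (m + 1) → ℝ} (hx : Monotone x) (hxK : ∀ j, x j ∈ K) (β : Equiv.Perm (Fin m)) :
    lamSum l f x β ≤ (lamVarOn l f K).toReal := by
  rw [← ENNReal.ofReal_le_iff_le_toReal hf, lamVarOn_eq_iSup_lamSum hl]
  exact le_iSup_of_le m <| le_iSup_of_le x <| le_iSup_of_le hx <| le_iSup_of_le hxK <|
    le_iSup_of_le β le_rfl

theorem lamSum_le_sum_mul_of_eq_sum {ι : Type*} [Fintype ι] (hl : ∀ k, 0 ≤ l k)
    {w : ι → ℝ} (hw : ∀ σ, 0 ≤ w σ) {x : Fin (m + 1) → ℝ} {y : ι → Fin (m + 1) → ℝ}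
    (hg : ∀ j, g (x j) = ∑ σ, w σ * f (y σ j)) (β : Equiv.Perm (Fin m)) :
    lamSum l g x β ≤ ∑ σ, w σ * lamSum l f (y σ) β := by
  simp only [lamSum, mul_sum]
  rw [sum_comm]
  refine sum_le_sum fun j _ => ?_
  simp only [← mul_div_assoc, ← sum_div, hg, ← sum_sub_distrib, ← mul_sub]
  gcongr
  · exact hl _
  · refine (abs_sum_le_sum_abs _ _).trans_eq (sum_congr rfl fun σ _ => ?_)
    rw [abs_mul, abs_of_nonneg (hw σ)]

end LamSum

theorem lamVar_bern_le {l : ℕ → ℝ} (hl : ∀ k, 0 ≤ l k) (n : ℕ) (f : ℝ → ℝ) :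
    lamVar l (bern n f) ≤ lamVar l f := by
  rcases eq_or_ne (lamVar l f) ⊤ with htop | hfin
  · exact htop ▸ le_top
  rw [lamVar, lamVarOn_eq_iSup_lamSum hl]
  refine iSup_le fun m => iSup_le fun x => iSup_le fun hx => iSup_le fun hx01 =>
    iSup_le fun β => ?_
  rw [← ENNReal.ofReal_toReal hfin]
  refine ENNReal.ofReal_le_ofReal ?_
  have hw (σ : Fin n → Fin (m + 2)) : 0 ≤ ∏ i, unitGaps x (σ i) :=
    prod_nonneg fun i _ => unitGaps_nonneg x hx hx01 _
  calc lamSum l (bern n f) x β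
      ≤ ∑ σ : Fin n → Fin (m + 2), (∏ i, unitGaps x (σ i)) * lamSum l f (empiricalCDF σ) β :=
        lamSum_le_sum_mul_of_eq_sum hl hw (bern_eq_sum_empiricalCDF n f x) β
    _ ≤ ∑ σ : Fin n → Fin (m + 2), (∏ i, unitGaps x (σ i)) * (lamVar l f).toReal :=
        sum_le_sum fun σ _ => mul_le_mul_of_nonneg_left (lamSum_le_toReal_lamVarOn hl hfin
          (monotone_empiricalCDF σ) (empiricalCDF_mem_Icc σ) β) (hw σ)
    _ = (lamVar l f).toReal := by
        rw [← sum_mul, ← Fintype.sum_pow, sum_unitGaps, one_pow, one_mul]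

theorem lamVarOn_le_of_tendsto {l : ℕ → ℝ} {f : ℝ → ℝ} {K : Set ℝ} {ι : Type*} {F : Filter ι}
    [F.NeBot] {g : ι → ℝ → ℝ} (hg : ∀ x ∈ K, Tendsto (fun i => g i x) F (𝓝 (f x)))
    {C : ℝ≥0∞} (hC : ∀ᶠ i in F, lamVarOn l (g i) K ≤ C) : lamVarOn l f K ≤ C := by
  refine iSup_le fun m => iSup_le fun x => iSup_le fun hx => iSup_le fun hxK =>
    iSup_le fun β => ?_
  have hlim : Tendsto (fun i => ∑ j : Fin m,
      ENNReal.ofReal (|g i (x j.succ) - g i (x j.castSucc)| / l (β j))) F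
      (𝓝 (∑ j : Fin m, ENNReal.ofReal (|f (x j.succ) - f (x j.castSucc)| / l (β j)))) :=
    tendsto_finsetSum _ fun j _ => ENNReal.tendsto_ofReal <|
      (((hg _ (hxK _)).sub (hg _ (hxK _))).abs).div_const _
  refine le_of_tendsto hlim (hC.mono fun i hi => le_trans ?_ hi)
  exact le_iSup_of_le m <| le_iSup_of_le x <| le_iSup_of_le hx <| le_iSup_of_le hxK <|
    le_iSup_of_le β le_rfl

theorem bern_apply_zero (n : ℕ) (f : ℝ → ℝ) : bern n f 0 = f 0 := by
  simp [bern, sum_range_succ']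

theorem lamNorm_bern_le {l : ℕ → ℝ} (hl : ∀ k, 0 ≤ l k) (n : ℕ) (f : ℝ → ℝ) :
    lamNorm l (bern n f) ≤ lamNorm l f := by
  rw [lamNorm, lamNorm, bern_apply_zero]
  exact add_le_add_left (lamVar_bern_le hl n f) _

theorem tendsto_bern {f : ℝ → ℝ} (hf : ContinuousOn f (Set.Icc 0 1)) {x : ℝ}
    (hx : x ∈ Set.Icc 0 1) : Tendsto (fun n => bern n f x) atTop (𝓝 (f x)) := by
  let F : C(unitInterval, ℝ) := ⟨fun t => f t, hf.domRestrict⟩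
  have hFapp (t : unitInterval) : F t = f t := rfl
  have hF (n : ℕ) : bernsteinApproximation n F ⟨x, hx⟩ = bern n f x := by
    rw [bernsteinApproximation.apply, bern, ← Fin.sum_univ_eq_sum_range]
    refine Fintype.sum_congr _ _ fun k => ?_
    simp only [hFapp, bernstein_apply, bernstein.z, smul_eq_mul]
    ring
  have h := ((continuous_eval_const (⟨x, hx⟩ : unitInterval)).tendsto F).comp
    (bernsteinApproximation_uniform F)
  simpa only [Function.comp_def, hF, hFapp] using h

/-- A continuous `f : [0,1] → ℝ` is of bounded Λ-variation if and only if
`sup_{n ≥ 1} ‖B_n f‖_Λ < ∞`. -/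
theorem continuous_lamBV_iff_bernstein_bounded (l : ℕ → ℝ) (hl : IsLambdaSeq l)
    (f : ℝ → ℝ) (hc : ContinuousOn f (Set.Icc 0 1)) :
    lamVar l f < ⊤ ↔ (⨆ (n : ℕ) (_ : 1 ≤ n), lamNorm l (bern n f)) < ⊤ := by
  have hl₀ : ∀ k, 0 ≤ l k := fun k => (hl.2.1 k).le
  constructor
  · intro hf
    refine (iSup₂_le fun n _ => lamNorm_bern_le hl₀ n f).trans_lt ?_
    exact ENNReal.add_lt_top.2 ⟨hf, ENNReal.ofReal_lt_top⟩
  · refine lt_of_le_of_lt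
      (lamVarOn_le_of_tendsto (F := atTop) (fun x hx => tendsto_bern hc hx) ?_)
    filter_upwards [eventually_ge_atTop 1] with n hn
    exact le_self_add.trans (le_iSup₂_of_le n hn le_rfl)
end
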